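/- Let ξ = X^1 − x for the one-dimensional skew-symmetric scheme X^1 = x + b·√(Δt)·σ(x)·ν, where ν ~ N(0,1) and P(b = +1 | ν) = p(x,ν), P(b = −1 | ν) = 1 − p(x,ν). Then ξ has Lebesgue density γ(x,ξ) = [p(x, ξ/(√(Δt)σ(x))) + 1 − p(x, −ξ/(√(Δt)σ(x)))] · (√(Δt)σ(x))^{−1} · φ(ξ/(√(Δt)σ(x))), where φ is the standard normal density. In particular, replacing p by p̃(x,ν) := (p(x,ν) + 1 − p(x,−ν))/2 yields the same law for ξ, and p̃(x,0) = 1/2. -/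

import Mathlib

open MeasureTheory ProbabilityTheory
open scoped ENNReal

/-!
Pushing `N(0,1)` forward by `ν ↦ ±sν` divides its density by `s`; the weight `q` at `ν` lands at
`ξ = sν` and the weight `1 - q` at `ν` lands at `ξ = -sν`, so the density at `ξ` carries the factor
`q(ξ/s) + 1 - q(-ξ/s)`, using that the Gaussian density is even. This factor, hence the law, is
unchanged when `q` is replaced by its symmetrization `(q(ν) + 1 - q(-ν))/2`.
-/

theorem MeasurableEquiv.map_withDensity {α β : Type*} [MeasurableSpace α] [MeasurableSpace β]
    (e : α ≃ᵐ β) (μ : Measure α) (f : α → ℝ≥0∞) :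
    (μ.withDensity f).map e = (μ.map e).withDensity (f ∘ e.symm) := by
  ext s hs
  rw [e.map_apply, withDensity_apply _ (e.measurable hs), withDensity_apply _ hs,
    Measure.restrict_map e.measurable hs, lintegral_map_equiv]
  simp

lemma gaussianPDFReal_zero_one (t : ℝ) :
    gaussianPDFReal 0 1 t = (Real.sqrt (2 * Real.pi))⁻¹ * Real.exp (-t ^ 2 / 2) := by
  simp [gaussianPDFReal]

lemma map_const_mul_withDensity_gaussianReal {c : ℝ} (hc : c ≠ 0) {g : ℝ → ℝ}
    (hg : Measurable g) :
    ((gaussianReal 0 1).withDensity fun ν => ENNReal.ofReal (g ν)).map (c * ·) =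
      volume.withDensity fun ξ =>
        ENNReal.ofReal (|c|⁻¹ * gaussianPDFReal 0 1 (ξ / c) * g (ξ / c)) := by
  rw [gaussianReal_of_var_ne_zero _ one_ne_zero,
    ← withDensity_mul _ (measurable_gaussianPDF 0 1) hg.ennreal_ofReal]
  change Measure.map (MeasurableEquiv.mulLeft₀ c hc) _ = _
  rw [MeasurableEquiv.map_withDensity, MeasurableEquiv.coe_mulLeft₀, Real.map_volume_mul_left hc,
    withDensity_smul_measure, ← withDensity_smul' _ _ ENNReal.ofReal_ne_top]
  congr 1
  funext ξ
  simp only [Pi.smul_apply, Function.comp_apply, Pi.mul_apply, smul_eq_mul, gaussianPDF,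
    MeasurableEquiv.symm_mulLeft₀, MeasurableEquiv.coe_mulLeft₀]
  rw [abs_inv, ← ENNReal.ofReal_mul (gaussianPDFReal_nonneg 0 1 _),
    ← ENNReal.ofReal_mul (by positivity), mul_assoc, div_eq_inv_mul]

/-- Law of `b s ν` with `ν ~ N(0,1)` and `P(b = 1 | ν) = q ν`, `P(b = -1 | ν) = 1 - q ν`. -/
noncomputable def skewLaw (s : ℝ) (q : ℝ → ℝ) : Measure ℝ :=
  ((gaussianReal 0 1).withDensity fun ν => ENNReal.ofReal (q ν)).map (s * ·) +
    ((gaussianReal 0 1).withDensity fun ν => ENNReal.ofReal (1 - q ν)).map fun ν => -(s * ν)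

lemma gaussianPDFReal_zero_neg (v : NNReal) (t : ℝ) :
    gaussianPDFReal 0 v (-t) = gaussianPDFReal 0 v t := by
  simp only [gaussianPDFReal, sub_zero, neg_sq]

lemma skewLaw_eq_withDensity {s : ℝ} (hs : 0 < s) {q : ℝ → ℝ} (hq : Measurable q)
    (hq01 : ∀ ν, q ν ∈ Set.Icc (0 : ℝ) 1) :
    skewLaw s q = volume.withDensity fun ξ =>
      ENNReal.ofReal ((q (ξ / s) + 1 - q (-ξ / s)) * (1 / s) * gaussianPDFReal 0 1 (ξ / s)) := by
  have hneg : (fun ν => -(s * ν)) = ((-s) * ·) := by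
    funext ν
    ring
  rw [skewLaw, hneg, map_const_mul_withDensity_gaussianReal hs.ne' hq,
    map_const_mul_withDensity_gaussianReal (neg_ne_zero.2 hs.ne') (g := fun ν => 1 - q ν)
      (by fun_prop),
    ← withDensity_add_left (by fun_prop)]
  congr 1 with ξ
  have hφ := gaussianPDFReal_nonneg 0 1 (ξ / s)
  obtain ⟨hq0, -⟩ := hq01 (ξ / s)
  obtain ⟨-, hq1⟩ := hq01 (-(ξ / s))
  rw [Pi.add_apply, abs_neg, abs_of_pos hs, div_neg, gaussianPDFReal_zero_neg,
    ← ENNReal.ofReal_add (by positivity) (mul_nonneg (by positivity) (by linarith)), neg_div]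
  congr 1
  ring

lemma skewLaw_symmetrize {s : ℝ} (hs : 0 < s) {q : ℝ → ℝ} (hq : Measurable q)
    (hq01 : ∀ ν, q ν ∈ Set.Icc (0 : ℝ) 1) :
    skewLaw s (fun ν => (q ν + 1 - q (-ν)) / 2) = skewLaw s q := by
  have hq01' : ∀ ν, (q ν + 1 - q (-ν)) / 2 ∈ Set.Icc (0 : ℝ) 1 := fun ν => by
    obtain ⟨h0, h1⟩ := hq01 ν
    obtain ⟨h0', h1'⟩ := hq01 (-ν)
    constructor <;> linarith
  rw [skewLaw_eq_withDensity hs (by fun_prop) hq01', skewLaw_eq_withDensity hs hq hq01]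
  simp only [neg_div, neg_neg]
  congr 2 with ξ
  congr 1
  ring

/-- The increment `ξ = X¹ - x` of the one-dimensional skew-symmetric scheme:
with `ν ~ N(0,1)`, `P(b = +1 | ν) = p(x,ν)`, and `ξ = b √Δt σ(x) ν`, the law
of `ξ` (written as the mixture of the two pushforwards weighted by `p` and
`1 - p`) has Lebesgue density
`γ(x,ξ) = [p(x, ξ/(√Δt σ(x))) + 1 - p(x, -ξ/(√Δt σ(x)))] (√Δt σ(x))⁻¹ φ(ξ/(√Δt σ(x)))`.
Moreover, replacing `p` by `p̃(x,ν) = (p(x,ν) + 1 - p(x,-ν))/2` yields the same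
law for `ξ`, and `p̃(x,0) = 1/2`. -/
theorem skew_increment_density (x Δt σx : ℝ) (hΔt : 0 < Δt) (hσ : 0 < σx)
    (p : ℝ → ℝ → ℝ) (hp_cont : Continuous fun ν => p x ν)
    (hp01 : ∀ ν : ℝ, p x ν ∈ Set.Icc (0 : ℝ) 1) :
    let s : ℝ := Real.sqrt Δt * σx
    let φ : ℝ → ℝ := fun t => (Real.sqrt (2 * Real.pi))⁻¹ * Real.exp (-t ^ 2 / 2)
    let γ : ℝ → ℝ := fun ξ => (p x (ξ / s) + 1 - p x (-ξ / s)) * (1 / s) * φ (ξ / s)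
    let lawξ : (ℝ → ℝ → ℝ) → Measure ℝ := fun q =>
      Measure.map (fun ν => s * ν)
          ((gaussianReal 0 1).withDensity fun ν => ENNReal.ofReal (q x ν))
        + Measure.map (fun ν => -(s * ν))
          ((gaussianReal 0 1).withDensity fun ν => ENNReal.ofReal (1 - q x ν))
    let ptilde : ℝ → ℝ → ℝ := fun y ν => (p y ν + 1 - p y (-ν)) / 2
    lawξ p = volume.withDensity (fun ξ => ENNReal.ofReal (γ ξ)) ∧
      lawξ ptilde = lawξ p ∧ ptilde x 0 = 1 / 2 := by
  intro s φ γ lawξ ptilde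
  have hs : 0 < s := mul_pos (Real.sqrt_pos.2 hΔt) hσ
  have hp : Measurable (p x) := hp_cont.measurable
  refine ⟨?_, skewLaw_symmetrize hs hp hp01, by simp [ptilde]⟩
  refine (skewLaw_eq_withDensity hs hp hp01).trans ?_
  simp only [gaussianPDFReal_zero_one]
  rfl
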